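/- In an optimal assignment X ++ [i] ++ Y (optimal over some bidder set and number of slots), the efficiency of the suffix satisfies E(Y) ≤ e_i/(1 − q_i), provided q(X) > 0 and q_i < 1. -/
import Mathlib


noncomputable section

/-- Efficiency of an ordered list of ads `(e, q)`. -/
def eff : List (ℝ × ℝ) → ℝ
  | [] => 0
  | a :: L => a.1 + a.2 * eff L

/-- Product of continuation probabilities of a list of ads. -/
def qprod (L : List (ℝ × ℝ)) : ℝ := (L.map Prod.snd).prod


lemma eff_append (A B : List (ℝ × ℝ)) : eff (A ++ B) = eff A + qprod A * eff B := by
  induction A with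
  | nil => simp [eff, qprod]
  | cons a A ih => simp [eff, qprod, List.map_cons, List.prod_cons] at *; ring_nf; rw [ih]; ring

/-- In an optimal assignment `X ++ [i] ++ Y`, the efficiency of the suffix satisfies
`E(Y) ≤ e_i/(1 − q_i)`, provided `q(X) > 0` and `q_i < 1`. -/
theorem suffix_bound_of_optimal
    (C : Finset (ℝ × ℝ))
    (hC : ∀ a ∈ C, 0 ≤ a.1 ∧ 0 ≤ a.2 ∧ a.2 < 1)
    (X Y : List (ℝ × ℝ)) (i : ℝ × ℝ)
    (hmem : ∀ a ∈ X ++ [i] ++ Y, a ∈ C)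
    (hnd : (X ++ [i] ++ Y).Nodup)
    (hqX : 0 < qprod X) (hqi : i.2 < 1)
    (hopt : ∀ T : List (ℝ × ℝ), T.Nodup → (∀ a ∈ T, a ∈ C) →
      T.length ≤ (X ++ [i] ++ Y).length → eff T ≤ eff (X ++ [i] ++ Y)) :
    eff Y ≤ i.1 / (1 - i.2) := by
  have h := hopt (X ++ Y) (by
      have : (X ++ Y).Sublist (X ++ [i] ++ Y) := by
        simpa using (List.sublist_append_left X ([i]) ).append_right Y
      exact hnd.sublist this)
    (fun a ha => hmem a (by simp at ha ⊢; tauto))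
    (by simp)
  rw [eff_append, eff_append] at h
  have h1 : eff (X ++ [i]) = eff X + qprod X * i.1 := by simp [eff_append, eff]
  have h2 : qprod (X ++ [i]) = qprod X * i.2 := by simp [qprod]
  rw [h1, h2] at h
  have key : eff Y ≤ i.1 + i.2 * eff Y := by nlinarith
  rw [le_div_iff₀ (by linarith)]
  nlinarith
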